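/- arXiv:1906.08552 — 2 statements merged into one kernel-verified Lean document; each statement's English description precedes it below -/
import Mathlib

section
/- Let X and Y be real random variables on a probability space such that the pair (X, Y) is centered and jointly Gaussian (i.e., every real linear combination c₁X + c₂Y is a centered Gaussian random variable). Then E[|e^X − e^Y|²] ≤ (√3/4) · E[|X − Y|²] · (8 e^{8 E[X²]} + 8 e^{8 E[Y²]})^{1/2}. -/
/-!
The pointwise inequality `|eᵃ - eᵇ| ≤ |a - b| (eᵃ + eᵇ) / 2` (the logarithmic mean of `eᵃ`
and `eᵇ` is at most their arithmetic mean), squared, integrated and combined with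
Cauchy–Schwarz, bounds `E |eˣ - eʸ|²` by `¼ √(E (X - Y)⁴) √(E (eˣ + eʸ)⁴)`, and
`(a + b)⁴ ≤ 8 (a⁴ + b⁴)` bounds the last expectation by `8 E e^{4X} + 8 E e^{4Y}`.
For a centered Gaussian `W` of variance `v` the moment generating function is `exp (v t² / 2)`:
its derivatives at `0` give `E W² = v` and `E W⁴ = 3 v²`, and its value at `4` gives
`E e^{4W} = e^{8v}`.
-/

open MeasureTheory ProbabilityTheory Real
open scoped NNReal

lemma exp_sub_one_le_mul_exp_add_one_div_two {u : ℝ} (hu : 0 ≤ u) :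
    exp u - 1 ≤ u * (exp u + 1) / 2 := by
  let g : ℝ → ℝ := fun u => u * (exp u + 1) / 2 - (exp u - 1)
  have hg' : ∀ u, HasDerivAt g ((1 - (1 - u) * exp u) / 2) u := fun u =>
    ((((hasDerivAt_id' u).mul ((hasDerivAt_exp u).add_const 1)).div_const 2).sub
      ((hasDerivAt_exp u).sub_const 1)).congr_deriv (by ring)
  have hmono : MonotoneOn g (Set.Ici 0) := by
    refine monotoneOn_of_deriv_nonneg (convex_Ici 0) (by fun_prop) (by fun_prop) fun u _ => ?_
    rw [(hg' u).deriv]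
    have h : (1 - u) * exp u ≤ 1 := by
      simpa [← exp_add, neg_add_eq_sub] using
        mul_le_mul_of_nonneg_right (add_one_le_exp (-u)) (exp_pos u).le
    linarith
  have := hmono Set.self_mem_Ici hu hu
  simp only [g, zero_mul, zero_div, exp_zero, sub_self] at this
  linarith

lemma abs_exp_sub_exp_le (a b : ℝ) : |exp a - exp b| ≤ |a - b| * (exp a + exp b) / 2 := by
  wlog hba : b ≤ a generalizing a b
  · simpa only [abs_sub_comm, add_comm] using this b a (le_of_not_ge hba)
  have h := mul_le_mul_of_nonneg_left (exp_sub_one_le_mul_exp_add_one_div_two (sub_nonneg.2 hba))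
    (exp_pos b).le
  rw [abs_of_nonneg (sub_nonneg.2 (exp_le_exp.2 hba)), abs_of_nonneg (sub_nonneg.2 hba)]
  have he : exp a = exp b * exp (a - b) := by rw [← exp_add]; ring_nf
  rw [he]
  linarith

lemma add_pow_four_le (x y : ℝ) : (x + y) ^ 4 ≤ 8 * (x ^ 4 + y ^ 4) := by
  nlinarith [sq_nonneg (x - y), sq_nonneg (x + y), sq_nonneg (x ^ 2 - y ^ 2)]

lemma exp_add_exp_pow_four_le (a b : ℝ) :
    (exp a + exp b) ^ 4 ≤ 8 * exp (4 * a) + 8 * exp (4 * b) := by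
  have h4 : ∀ x : ℝ, exp (4 * x) = exp x ^ 4 := fun x => by rw [← exp_nat_mul]; norm_num
  rw [h4, h4]
  linarith [add_pow_four_le (exp a) (exp b)]

lemma deriv_mul_exp_mul_sq {p : ℝ → ℝ} {p' c t : ℝ} (hp : HasDerivAt p p' t) :
    deriv (fun s => p s * exp (c * s ^ 2)) t = (p' + 2 * c * t * p t) * exp (c * t ^ 2) := by
  have hq : HasDerivAt (fun s => c * s ^ 2) (c * (2 * t)) t := by
    simpa using (hasDerivAt_pow 2 t).const_mul c
  exact (hp.mul hq.exp).deriv.trans (by ring)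

lemma iteratedDeriv_two_exp_mul_sq (c : ℝ) :
    iteratedDeriv 2 (fun t => exp (c * t ^ 2))
      = fun t => (2 * c + 4 * c ^ 2 * t ^ 2) * exp (c * t ^ 2) := by
  have d1 : deriv (fun t => exp (c * t ^ 2)) = fun t => 2 * c * t * exp (c * t ^ 2) := by
    funext t
    simpa using deriv_mul_exp_mul_sq (c := c) (hasDerivAt_const t (1 : ℝ))
  have d2 : deriv (fun t => 2 * c * t * exp (c * t ^ 2))
      = fun t => (2 * c + 4 * c ^ 2 * t ^ 2) * exp (c * t ^ 2) := by
    funext t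
    rw [deriv_mul_exp_mul_sq (p := fun t => 2 * c * t) ((hasDerivAt_id t).const_mul (2 * c))]
    ring
  rw [iteratedDeriv_succ', iteratedDeriv_one, d1, d2]

lemma iteratedDeriv_four_exp_mul_sq_zero (c : ℝ) :
    iteratedDeriv 4 (fun t => exp (c * t ^ 2)) 0 = 12 * c ^ 2 := by
  have d3 : deriv (fun t => (2 * c + 4 * c ^ 2 * t ^ 2) * exp (c * t ^ 2))
      = fun t => (12 * c ^ 2 * t + 8 * c ^ 3 * t ^ 3) * exp (c * t ^ 2) := by
    funext t
    rw [deriv_mul_exp_mul_sq (p := fun t => 2 * c + 4 * c ^ 2 * t ^ 2)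
      (((hasDerivAt_pow 2 t).const_mul (4 * c ^ 2)).const_add (2 * c))]
    ring
  rw [iteratedDeriv_succ, iteratedDeriv_succ, iteratedDeriv_two_exp_mul_sq, d3,
    deriv_mul_exp_mul_sq (p := fun t => 12 * c ^ 2 * t + 8 * c ^ 3 * t ^ 3)
      (((hasDerivAt_id (0 : ℝ)).const_mul (12 * c ^ 2)).add
        ((hasDerivAt_pow 3 (0 : ℝ)).const_mul (8 * c ^ 3)))]
  simp

lemma integral_mul_le_sqrt_mul_sqrt {α : Type*} [MeasurableSpace α] {μ : Measure α}
    {f g : α → ℝ} (hf : 0 ≤ᵐ[μ] f) (hg : 0 ≤ᵐ[μ] g) (hf2 : MemLp f 2 μ)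
    (hg2 : MemLp g 2 μ) :
    ∫ a, f a * g a ∂μ ≤ √(∫ a, f a ^ 2 ∂μ) * √(∫ a, g a ^ 2 ∂μ) := by
  have h := integral_mul_le_Lp_mul_Lq_of_nonneg Real.HolderConjugate.two_two hf hg
    (by simpa using hf2) (by simpa using hg2)
  simpa only [rpow_two, sqrt_eq_rpow, one_div] using h

section ExpDifference

variable {α : Type*} [MeasurableSpace α] {μ : Measure α} {X Y : α → ℝ}

lemma integrable_exp_add_exp_pow_four (hX : AEMeasurable X μ) (hY : AEMeasurable Y μ)
    (hX4 : Integrable (fun a => exp (4 * X a)) μ) (hY4 : Integrable (fun a => exp (4 * Y a)) μ) :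
    Integrable (fun a => (exp (X a) + exp (Y a)) ^ 4) μ :=
  ((hX4.const_mul 8).add (hY4.const_mul 8)).mono' (by fun_prop) <|
    .of_forall fun a => by
      rw [Real.norm_of_nonneg (by positivity)]
      exact exp_add_exp_pow_four_le (X a) (Y a)

lemma integral_exp_add_exp_pow_four_le (hX : AEMeasurable X μ) (hY : AEMeasurable Y μ)
    (hX4 : Integrable (fun a => exp (4 * X a)) μ) (hY4 : Integrable (fun a => exp (4 * Y a)) μ) :
    ∫ a, (exp (X a) + exp (Y a)) ^ 4 ∂μ
      ≤ 8 * ∫ a, exp (4 * X a) ∂μ + 8 * ∫ a, exp (4 * Y a) ∂μ := by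
  rw [← integral_const_mul, ← integral_const_mul,
    ← integral_add (hX4.const_mul 8) (hY4.const_mul 8)]
  exact integral_mono (integrable_exp_add_exp_pow_four hX hY hX4 hY4)
    ((hX4.const_mul 8).add (hY4.const_mul 8)) fun a => exp_add_exp_pow_four_le (X a) (Y a)

lemma integral_sq_abs_exp_sub_exp_le (hX : AEMeasurable X μ) (hY : AEMeasurable Y μ)
    (hXY : Integrable (fun a => (X a - Y a) ^ 4) μ)
    (hX4 : Integrable (fun a => exp (4 * X a)) μ) (hY4 : Integrable (fun a => exp (4 * Y a)) μ) :
    ∫ a, |exp (X a) - exp (Y a)| ^ 2 ∂μ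
      ≤ 1 / 4 * √(∫ a, (X a - Y a) ^ 4 ∂μ)
          * √(8 * ∫ a, exp (4 * X a) ∂μ + 8 * ∫ a, exp (4 * Y a) ∂μ) := by
  set D : α → ℝ := fun a => (X a - Y a) ^ 2
  set S : α → ℝ := fun a => (exp (X a) + exp (Y a)) ^ 2
  have hD : MemLp D 2 μ := (memLp_two_iff_integrable_sq (by fun_prop)).2 <| by
    simpa only [D, ← pow_mul] using hXY
  have hS : MemLp S 2 μ := (memLp_two_iff_integrable_sq (by fun_prop)).2 <| by
    simpa only [S, ← pow_mul] using integrable_exp_add_exp_pow_four hX hY hX4 hY4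
  have hpoint : ∀ a, |exp (X a) - exp (Y a)| ^ 2 ≤ 1 / 4 * (D a * S a) := fun a => by
    have h := pow_le_pow_left₀ (abs_nonneg _) (abs_exp_sub_exp_le (X a) (Y a)) 2
    rw [div_pow, mul_pow, sq_abs (X a - Y a)] at h
    linarith
  calc ∫ a, |exp (X a) - exp (Y a)| ^ 2 ∂μ
      ≤ ∫ a, 1 / 4 * (D a * S a) ∂μ :=
        integral_mono_of_nonneg (.of_forall fun a => by positivity)
          ((hD.integrable_mul hS).const_mul _) (.of_forall hpoint)
    _ = 1 / 4 * ∫ a, D a * S a ∂μ := integral_const_mul _ _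
    _ ≤ 1 / 4 * (√(∫ a, D a ^ 2 ∂μ) * √(∫ a, S a ^ 2 ∂μ)) := by
        gcongr
        exact integral_mul_le_sqrt_mul_sqrt (.of_forall fun a => by positivity)
          (.of_forall fun a => by positivity) hD hS
    _ ≤ _ := by
        simp only [D, S, ← pow_mul, mul_assoc]
        gcongr
        exact integral_exp_add_exp_pow_four_le hX hY hX4 hY4

end ExpDifference

section GaussianMoments

variable {Ω : Type*} [MeasurableSpace Ω] {P : Measure Ω} [IsProbabilityMeasure P]
  {W : Ω → ℝ} {μ : ℝ} {v : ℝ≥0}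

lemma integrable_exp_mul_of_map_eq_gaussianReal (hW : P.map W = gaussianReal μ v) (t : ℝ) :
    Integrable (fun ω => exp (t * W ω)) P := by
  rw [← mgf_pos_iff, mgf_gaussianReal hW]
  exact exp_pos _

lemma integrableExpSet_eq_univ_of_map_eq_gaussianReal (hW : P.map W = gaussianReal μ v) :
    integrableExpSet W P = Set.univ :=
  Set.eq_univ_of_forall (integrable_exp_mul_of_map_eq_gaussianReal hW)

lemma integrable_pow_of_map_eq_gaussianReal (hW : P.map W = gaussianReal μ v) (n : ℕ) :
    Integrable (fun ω => W ω ^ n) P :=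
  integrable_pow_of_mem_interior_integrableExpSet
    (by simp [integrableExpSet_eq_univ_of_map_eq_gaussianReal hW]) n

lemma integral_pow_eq_iteratedDeriv_of_map_eq_gaussianReal (hW : P.map W = gaussianReal 0 v)
    (n : ℕ) : ∫ ω, W ω ^ n ∂P = iteratedDeriv n (fun t => exp (v / 2 * t ^ 2)) 0 := by
  have hmgf : mgf W P = fun t => exp (v / 2 * t ^ 2) := by
    funext t
    rw [mgf_gaussianReal hW]
    ring_nf
  rw [← hmgf, iteratedDeriv_mgf_zero
    (by simp [integrableExpSet_eq_univ_of_map_eq_gaussianReal hW])]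
  rfl

lemma integral_sq_of_map_eq_gaussianReal (hW : P.map W = gaussianReal 0 v) :
    ∫ ω, W ω ^ 2 ∂P = v := by
  rw [integral_pow_eq_iteratedDeriv_of_map_eq_gaussianReal hW, iteratedDeriv_two_exp_mul_sq]
  norm_num [mul_div_cancel₀]

lemma integral_pow_four_of_map_eq_gaussianReal (hW : P.map W = gaussianReal 0 v) :
    ∫ ω, W ω ^ 4 ∂P = 3 * (∫ ω, W ω ^ 2 ∂P) ^ 2 := by
  rw [integral_pow_eq_iteratedDeriv_of_map_eq_gaussianReal hW, iteratedDeriv_four_exp_mul_sq_zero,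
    integral_sq_of_map_eq_gaussianReal hW]
  ring

lemma integral_exp_mul_of_map_eq_gaussianReal (hW : P.map W = gaussianReal 0 v) (t : ℝ) :
    ∫ ω, exp (t * W ω) ∂P = exp (t ^ 2 / 2 * ∫ ω, W ω ^ 2 ∂P) := by
  rw [integral_sq_of_map_eq_gaussianReal hW, ← mgf, mgf_gaussianReal hW]
  ring_nf

end GaussianMoments

theorem gaussian_exp_diff_L2 {Ω : Type*} [MeasurableSpace Ω]
    (P : Measure Ω) [IsProbabilityMeasure P]
    (X Y : Ω → ℝ) (hX : Measurable X) (hY : Measurable Y)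
    (hgauss : ∀ c₁ c₂ : ℝ, ∃ v : NNReal,
      P.map (fun ω => c₁ * X ω + c₂ * Y ω) = gaussianReal 0 v) :
    ∫ ω, |Real.exp (X ω) - Real.exp (Y ω)| ^ 2 ∂P
      ≤ (Real.sqrt 3 / 4) * (∫ ω, |X ω - Y ω| ^ 2 ∂P) *
          Real.sqrt (8 * Real.exp (8 * ∫ ω, (X ω) ^ 2 ∂P) +
                     8 * Real.exp (8 * ∫ ω, (Y ω) ^ 2 ∂P)) := by
  obtain ⟨vX, hlawX⟩ : ∃ v : ℝ≥0, P.map X = gaussianReal 0 v := by simpa using hgauss 1 0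
  obtain ⟨vY, hlawY⟩ : ∃ v : ℝ≥0, P.map Y = gaussianReal 0 v := by simpa using hgauss 0 1
  obtain ⟨vZ, hlawZ⟩ : ∃ v : ℝ≥0, P.map (fun ω => X ω - Y ω) = gaussianReal 0 v := by
    simpa [sub_eq_add_neg] using hgauss 1 (-1)
  have h := integral_sq_abs_exp_sub_exp_le hX.aemeasurable hY.aemeasurable
    (integrable_pow_of_map_eq_gaussianReal hlawZ 4)
    (integrable_exp_mul_of_map_eq_gaussianReal hlawX 4)
    (integrable_exp_mul_of_map_eq_gaussianReal hlawY 4)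
  rw [integral_pow_four_of_map_eq_gaussianReal hlawZ, integral_exp_mul_of_map_eq_gaussianReal hlawX,
    integral_exp_mul_of_map_eq_gaussianReal hlawY, sqrt_mul (by norm_num),
    sqrt_sq (integral_nonneg fun ω => sq_nonneg _), show (4 : ℝ) ^ 2 / 2 = 8 by norm_num] at h
  refine h.trans_eq ?_
  simp only [sq_abs]
  ring
end

section
/- Let H ∈ (0,1), T > 0, a ∈ ℝ, σ > 0, and let K : [0,T] × [0,T] → ℝ be a nonnegative measurable function with K(s,r) = 0 whenever r > s, satisfying ∫₀^{min(s,t)} K(s,r) K(t,r) dr = (s^{2H} + t^{2H} − |t − s|^{2H})/2 for all s, t ∈ [0,T]. Then for every continuous function b : [0,T] → ℝ, ∫₀ᵀ (∫_rᵀ σ K(s,r) e^{a s + σ b(s)} ds)² dr ≥ (T^{2H+2}/(2H+2)) · σ² · e^{−2|a|T + 2σ min_{s∈[0,T]} b(s)}. -/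
open Set MeasureTheory Function ENNReal

/-!
Since `K ≥ 0` and the weight `w(s) = σ e^{as + σ b(s)}` is at least `c = σ e^{-|a|T + σ min b}` on
`[0,T]`, the inner integral is at least `c ∫_r^T K(s,r) ds`. By Tonelli,
`∫₀ᵀ (∫_r^T K(s,r) ds)² dr = ∫₀ᵀ ∫₀ᵀ ∫₀^{s∧t} K(s,r) K(t,r) dr ds dt = ∫₀ᵀ ∫₀ᵀ R_H(s,t) ds dt`,
which is `T^{2H+2}/(2H+2)`, the variance of `∫₀ᵀ B^H_s ds`. The squares are handled in `ℝ≥0∞`,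
where Tonelli needs no integrability; the upper bound of `w` on `[0,T]` makes the outer integral
finite, so that the real integral in the statement is not a junk value.
-/

noncomputable def fbmCovariance (H s t : ℝ) : ℝ := (s ^ (2*H) + t ^ (2*H) - |t - s| ^ (2*H)) / 2

theorem fbmCovariance_pos {H s t : ℝ} (hH : 0 < H) (hs : 0 < s) (ht : 0 < t) :
    0 < fbmCovariance H s t := by
  have hlt : |t - s| < max s t := by
    rw [abs_sub_lt_iff]; constructor <;> linarith [le_max_left s t, le_max_right s t]
  have hmax : max s t ^ (2*H) < s ^ (2*H) + t ^ (2*H) := by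
    rcases max_choice s t with h | h <;> rw [h] <;>
      linarith [Real.rpow_pos_of_pos hs (2*H), Real.rpow_pos_of_pos ht (2*H)]
  have := Real.rpow_lt_rpow (abs_nonneg _) hlt (by linarith : 0 < 2*H)
  unfold fbmCovariance
  linarith

theorem continuous_fbmCovariance {H : ℝ} (hH : 0 < H) :
    Continuous (Function.uncurry (fbmCovariance H)) := by
  unfold fbmCovariance Function.uncurry
  fun_prop (disch := positivity)

theorem integral_rpow_zero_left {p T : ℝ} (hp : -1 < p) :
    ∫ x in (0:ℝ)..T, x ^ p = T ^ (p + 1) / (p + 1) := by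
  rw [integral_rpow (Or.inl hp), Real.zero_rpow (by linarith), sub_zero]

theorem integral_abs_sub_rpow {p s T : ℝ} (hp : 0 ≤ p) (hs : s ∈ Icc 0 T) :
    ∫ t in (0:ℝ)..T, |t - s| ^ p = (s ^ (p + 1) + (T - s) ^ (p + 1)) / (p + 1) := by
  have hint : ∀ a b : ℝ, IntervalIntegrable (fun t => |t - s| ^ p) volume a b := fun a b =>
    (by fun_prop (disch := assumption) : Continuous fun t => |t - s| ^ p).intervalIntegrable a b
  have hleft : ∫ t in (0:ℝ)..s, |t - s| ^ p = ∫ t in (0:ℝ)..s, (s - t) ^ p :=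
    intervalIntegral.integral_congr fun t ht => by
      rw [uIcc_of_le hs.1] at ht
      rw [abs_sub_comm, abs_of_nonneg (by linarith [ht.2])]
  have hright : ∫ t in s..T, |t - s| ^ p = ∫ t in s..T, (t - s) ^ p :=
    intervalIntegral.integral_congr fun t ht => by
      rw [uIcc_of_le hs.2] at ht
      rw [abs_of_nonneg (by linarith [ht.1])]
  rw [← intervalIntegral.integral_add_adjacent_intervals (hint 0 s) (hint s T), hleft, hright,
    intervalIntegral.integral_comp_sub_left (· ^ p),
    intervalIntegral.integral_comp_sub_right (· ^ p)]
  simp only [sub_self, sub_zero]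
  rw [integral_rpow_zero_left (by linarith), integral_rpow_zero_left (by linarith), add_div]

theorem integral_fbmCovariance_right {H s T : ℝ} (hH : 0 < H) (hs : s ∈ Icc 0 T) :
    ∫ t in (0:ℝ)..T, fbmCovariance H s t
      = (T * s ^ (2*H) + (T ^ (2*H+1) - s ^ (2*H+1) - (T - s) ^ (2*H+1)) / (2*H+1)) / 2 := by
  have h₀ : IntervalIntegrable (fun t : ℝ => t ^ (2*H)) volume 0 T :=
    intervalIntegral.intervalIntegrable_rpow' (by linarith)
  have habs : IntervalIntegrable (fun t => |t - s| ^ (2*H)) volume 0 T :=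
    (by fun_prop (disch := positivity) : Continuous fun t => |t - s| ^ (2*H)).intervalIntegrable 0 T
  unfold fbmCovariance
  rw [intervalIntegral.integral_div, intervalIntegral.integral_sub
    (intervalIntegrable_const.add h₀) habs,
    intervalIntegral.integral_add intervalIntegrable_const h₀,
    intervalIntegral.integral_const, integral_rpow_zero_left (by linarith),
    integral_abs_sub_rpow (by positivity) hs]
  simp only [smul_eq_mul, sub_zero]
  ring

theorem integral_integral_fbmCovariance {H T : ℝ} (hH : 0 < H) (hT : 0 ≤ T) :
    ∫ s in (0:ℝ)..T, ∫ t in (0:ℝ)..T, fbmCovariance H s t = T ^ (2*H+2) / (2*H+2) := by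
  have h₀ : IntervalIntegrable (fun s : ℝ => s ^ (2*H)) volume 0 T :=
    intervalIntegral.intervalIntegrable_rpow' (by linarith)
  have h₁ : IntervalIntegrable (fun s : ℝ => s ^ (2*H+1)) volume 0 T :=
    intervalIntegral.intervalIntegrable_rpow' (by linarith)
  have hrev : IntervalIntegrable (fun s : ℝ => (T - s) ^ (2*H+1)) volume 0 T :=
    (by fun_prop (disch := positivity) : Continuous fun s : ℝ => (T - s) ^ (2*H+1)
      ).intervalIntegrable 0 T
  rw [intervalIntegral.integral_congr fun s hs =>
    integral_fbmCovariance_right hH (uIcc_of_le hT ▸ hs)]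
  rw [intervalIntegral.integral_div, intervalIntegral.integral_add (h₀.const_mul T)
      (((intervalIntegrable_const.sub h₁).sub hrev).div_const _),
    intervalIntegral.integral_const_mul, intervalIntegral.integral_div,
    intervalIntegral.integral_sub (intervalIntegrable_const.sub h₁) hrev,
    intervalIntegral.integral_sub intervalIntegrable_const h₁,
    intervalIntegral.integral_comp_sub_left (· ^ (2*H+1)), intervalIntegral.integral_const]
  simp only [sub_self, sub_zero, smul_eq_mul]
  rw [integral_rpow_zero_left (by linarith), integral_rpow_zero_left (by linarith),
    show 2*H+1+1 = 2*H+2 by ring, show T ^ (2*H+2) = T * T ^ (2*H+1) by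
      rw [show 2*H+2 = 1 + (2*H+1) by ring, Real.rpow_add' hT (by linarith), Real.rpow_one]]
  field_simp
  ring

theorem lintegral_ofReal_Ioc {f : ℝ → ℝ} {a b : ℝ} (hab : a ≤ b)
    (hf : IntegrableOn f (Ioc a b)) (hnn : ∀ x ∈ Ioc a b, 0 ≤ f x) :
    ∫⁻ x in Ioc a b, ENNReal.ofReal (f x) = ENNReal.ofReal (∫ x in a..b, f x) := by
  rw [intervalIntegral.integral_of_le hab,
    ofReal_integral_eq_lintegral_ofReal hf
      ((ae_restrict_iff' measurableSet_Ioc).2 (.of_forall hnn))]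

theorem lintegral_lintegral_ofReal_fbmCovariance {H T : ℝ} (hH : 0 < H) (hT : 0 ≤ T) :
    ∫⁻ s in Ioc 0 T, ∫⁻ t in Ioc 0 T, ENNReal.ofReal (fbmCovariance H s t)
      = ENNReal.ofReal (T ^ (2*H+2) / (2*H+2)) := by
  have hcont := continuous_fbmCovariance hH
  have hinner : ∀ s ∈ Ioc 0 T, ∫⁻ t in Ioc 0 T, ENNReal.ofReal (fbmCovariance H s t)
      = ENNReal.ofReal (∫ t in (0:ℝ)..T, fbmCovariance H s t) := fun s hs =>
    lintegral_ofReal_Ioc hT (hcont.uncurry_left s).integrableOn_Ioc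
      fun t ht => (fbmCovariance_pos hH hs.1 ht.1).le
  rw [setLIntegral_congr_fun measurableSet_Ioc hinner, lintegral_ofReal_Ioc hT
    (intervalIntegral.continuous_parametric_intervalIntegral_of_continuous' hcont 0 T
      ).integrableOn_Ioc,
    integral_integral_fbmCovariance hH hT]
  intro s hs
  rw [intervalIntegral.integral_of_le hT]
  exact setIntegral_nonneg measurableSet_Ioc fun t ht => (fbmCovariance_pos hH hs.1 ht.1).le

theorem lintegral_sq_lintegral {α β : Type*} [MeasurableSpace α] [MeasurableSpace β]
    {μ : Measure α} {ν : Measure β} [SFinite μ] [SFinite ν] {k : α → β → ℝ≥0∞}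
    (hk : Measurable (uncurry k)) :
    ∫⁻ r, (∫⁻ s, k s r ∂μ) ^ 2 ∂ν = ∫⁻ s, ∫⁻ t, ∫⁻ r, k s r * k t r ∂ν ∂μ ∂μ := by
  have hprod : Measurable fun p : (β × α) × α => k p.1.2 p.1.1 * k p.2 p.1.1 := by fun_prop
  calc ∫⁻ r, (∫⁻ s, k s r ∂μ) ^ 2 ∂ν
      = ∫⁻ r, ∫⁻ s, ∫⁻ t, k s r * k t r ∂μ ∂μ ∂ν := lintegral_congr fun r => by
        rw [sq, lintegral_lintegral_mul hk.of_uncurry_right.aemeasurable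
          hk.of_uncurry_right.aemeasurable]
    _ = ∫⁻ s, ∫⁻ r, ∫⁻ t, k s r * k t r ∂μ ∂ν ∂μ :=
        lintegral_lintegral_swap hprod.lintegral_prod_right'.aemeasurable
    _ = ∫⁻ s, ∫⁻ t, ∫⁻ r, k s r * k t r ∂ν ∂μ ∂μ := lintegral_congr fun s =>
        lintegral_lintegral_swap (by fun_prop)

theorem lintegral_Ioc_sq_setLIntegral_Ioc {k : ℝ → ℝ → ℝ≥0∞} (hk : Measurable (uncurry k))
    (T : ℝ) :
    ∫⁻ r in Ioc 0 T, (∫⁻ s in Ioc r T, k s r) ^ 2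
      = ∫⁻ s in Ioc 0 T, ∫⁻ t in Ioc 0 T, ∫⁻ r in Ioc 0 (min s t), k s r * k t r := by
  set k' : ℝ → ℝ → ℝ≥0∞ := fun s r => (Iio s).indicator (k s) r
  have hk' : Measurable (uncurry k') :=
    hk.indicator (measurableSet_lt measurable_snd measurable_fst)
  have hsingle : ∀ r ∈ Ioc 0 T, ∫⁻ s in Ioc 0 T, k' s r = ∫⁻ s in Ioc r T, k s r := by
    intro r hr
    have hset : Ioi r ∩ Ioc 0 T = Ioc r T := by
      ext s; simp only [mem_inter_iff, mem_Ioi, mem_Ioc]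
      exact ⟨fun h => ⟨h.1, h.2.2⟩, fun h => ⟨h.1, hr.1.trans h.1, h.2⟩⟩
    rw [← hset, ← Measure.restrict_restrict measurableSet_Ioi,
      ← lintegral_indicator measurableSet_Ioi]
    exact lintegral_congr fun s => by by_cases h : r < s <;> simp [k', h]
  have hpair : ∀ s ∈ Ioc 0 T, ∀ t ∈ Ioc 0 T, ∫⁻ r in Ioc 0 T, k' s r * k' t r
      = ∫⁻ r in Ioc 0 (min s t), k s r * k t r := by
    intro s hs t ht
    have hset : Iio (min s t) ∩ Ioc 0 T = Ioo 0 (min s t) := by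
      ext r; simp only [mem_inter_iff, mem_Iio, mem_Ioc, mem_Ioo]
      exact ⟨fun h => ⟨h.2.1, h.1⟩,
        fun h => ⟨h.2, h.1, h.2.le.trans ((min_le_left s t).trans hs.2)⟩⟩
    rw [← Measure.restrict_congr_set (Ioo_ae_eq_Ioc (a := 0) (b := min s t)), ← hset,
      ← Measure.restrict_restrict measurableSet_Iio, ← lintegral_indicator measurableSet_Iio]
    exact lintegral_congr fun r => by
      by_cases h₁ : r < s <;> by_cases h₂ : r < t <;> simp [k', h₁, h₂]
  rw [← setLIntegral_congr_fun measurableSet_Ioc fun r hr => congrArg (· ^ 2) (hsingle r hr),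
    lintegral_sq_lintegral hk']
  exact setLIntegral_congr_fun measurableSet_Ioc fun s hs =>
    setLIntegral_congr_fun measurableSet_Ioc fun t ht => hpair s hs t ht

theorem measurable_setLIntegral_Ioc {f : ℝ → ℝ → ℝ≥0∞} (hf : Measurable (uncurry f)) (T : ℝ) :
    Measurable fun r => ∫⁻ s in Ioc r T, f s r := by
  have hset : MeasurableSet {p : ℝ × ℝ | p.1 < p.2 ∧ p.2 ≤ T} :=
    (measurableSet_lt measurable_fst measurable_snd).inter
      (measurableSet_le measurable_snd measurable_const)
  have hind : Measurable ({p : ℝ × ℝ | p.1 < p.2 ∧ p.2 ≤ T}.indicator fun p => f p.2 p.1) :=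
    (hf.comp measurable_swap).indicator hset
  convert hind.lintegral_prod_right' (ν := volume) using 2 with r
  rw [← lintegral_indicator measurableSet_Ioc]
  rfl

section VolterraKernel

variable {H T : ℝ} {K : ℝ → ℝ → ℝ}

theorem lintegral_mul_kernel_eq_fbmCovariance (hH : 0 < H)
    (hKnonneg : ∀ s ∈ Icc 0 T, ∀ r ∈ Icc 0 T, 0 ≤ K s r)
    (hKcov : ∀ s ∈ Icc 0 T, ∀ t ∈ Icc 0 T,
      ∫ r in (0:ℝ)..(min s t), K s r * K t r = fbmCovariance H s t)
    {s t : ℝ} (hs : s ∈ Ioc 0 T) (ht : t ∈ Ioc 0 T) :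
    ∫⁻ r in Ioc 0 (min s t), ENNReal.ofReal (K s r) * ENNReal.ofReal (K t r)
      = ENNReal.ofReal (fbmCovariance H s t) := by
  have hmin : 0 ≤ min s t := le_min hs.1.le ht.1.le
  have hsub : Ioc 0 (min s t) ⊆ Icc 0 T := fun r hr =>
    ⟨hr.1.le, hr.2.trans ((min_le_left s t).trans hs.2)⟩
  have hcov := hKcov s (Ioc_subset_Icc_self hs) t (Ioc_subset_Icc_self ht)
  -- the covariance is nonzero, so the integral in `hKcov` is not a junk value
  have hint : IntegrableOn (fun r => K s r * K t r) (Ioc 0 (min s t)) := by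
    by_contra hnot
    rw [intervalIntegral.integral_undef
      (mt (intervalIntegrable_iff_integrableOn_Ioc_of_le hmin).1 hnot)] at hcov
    exact (fbmCovariance_pos hH hs.1 ht.1).ne hcov
  rw [← hcov, ← lintegral_ofReal_Ioc hmin hint fun r hr =>
    mul_nonneg (hKnonneg s (Ioc_subset_Icc_self hs) r (hsub hr))
      (hKnonneg t (Ioc_subset_Icc_self ht) r (hsub hr))]
  exact setLIntegral_congr_fun measurableSet_Ioc fun r hr =>
    (ENNReal.ofReal_mul (hKnonneg s (Ioc_subset_Icc_self hs) r (hsub hr))).symm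

theorem lintegral_sq_lintegral_kernel (hH : 0 < H) (hT : 0 ≤ T)
    (hKmeas : Measurable (uncurry K))
    (hKnonneg : ∀ s ∈ Icc 0 T, ∀ r ∈ Icc 0 T, 0 ≤ K s r)
    (hKcov : ∀ s ∈ Icc 0 T, ∀ t ∈ Icc 0 T,
      ∫ r in (0:ℝ)..(min s t), K s r * K t r = fbmCovariance H s t) :
    ∫⁻ r in Ioc 0 T, (∫⁻ s in Ioc r T, ENNReal.ofReal (K s r)) ^ 2
      = ENNReal.ofReal (T ^ (2*H+2) / (2*H+2)) := by
  rw [lintegral_Ioc_sq_setLIntegral_Ioc (k := fun s r => ENNReal.ofReal (K s r)) (by fun_prop),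
    ← lintegral_lintegral_ofReal_fbmCovariance hH hT]
  exact setLIntegral_congr_fun measurableSet_Ioc fun s hs =>
    setLIntegral_congr_fun measurableSet_Ioc fun t ht =>
      lintegral_mul_kernel_eq_fbmCovariance hH hKnonneg hKcov hs ht

theorem le_integral_sq_integral_kernel_mul_of_measurable (hH : 0 < H) (hT : 0 ≤ T)
    (hKmeas : Measurable (uncurry K))
    (hKnonneg : ∀ s ∈ Icc 0 T, ∀ r ∈ Icc 0 T, 0 ≤ K s r)
    (hKcov : ∀ s ∈ Icc 0 T, ∀ t ∈ Icc 0 T,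
      ∫ r in (0:ℝ)..(min s t), K s r * K t r = fbmCovariance H s t)
    {w : ℝ → ℝ} (hw : Measurable w) (hw_bdd : BddAbove (w '' Icc 0 T))
    {c : ℝ} (hc : 0 ≤ c) (hcw : ∀ s ∈ Icc 0 T, c ≤ w s) :
    c ^ 2 * (T ^ (2*H+2) / (2*H+2)) ≤ ∫ r in (0:ℝ)..T, (∫ s in r..T, K s r * w s) ^ 2 := by
  obtain ⟨M, hM⟩ := hw_bdd
  set V := T ^ (2*H+2) / (2*H+2)
  set L : ℝ → ℝ≥0∞ := fun r => ∫⁻ s in Ioc r T, ENNReal.ofReal (K s r)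
  set F : ℝ → ℝ≥0∞ := fun r => ∫⁻ s in Ioc r T, ENNReal.ofReal (K s r * w s)
  have hmem : ∀ r ∈ Ioc 0 T, ∀ s ∈ Ioc r T, s ∈ Icc 0 T ∧ r ∈ Icc 0 T := fun r hr s hs =>
    ⟨⟨hr.1.le.trans hs.1.le, hs.2⟩, Ioc_subset_Icc_self hr⟩
  have hK : ∀ r ∈ Ioc 0 T, ∀ s ∈ Ioc r T, 0 ≤ K s r := fun r hr s hs =>
    hKnonneg s (hmem r hr s hs).1 r (hmem r hr s hs).2
  have hF_le : ∀ r ∈ Ioc 0 T, F r ≤ ENNReal.ofReal M * L r := fun r hr => by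
    rw [← lintegral_const_mul' _ _ ofReal_ne_top]
    refine setLIntegral_mono' measurableSet_Ioc fun s hs => ?_
    rw [← ENNReal.ofReal_mul' (hK r hr s hs), mul_comm M]
    exact ENNReal.ofReal_le_ofReal
      (mul_le_mul_of_nonneg_left (hM ⟨s, (hmem r hr s hs).1, rfl⟩) (hK r hr s hs))
  have hF_ge : ∀ r ∈ Ioc 0 T, ENNReal.ofReal c * L r ≤ F r := fun r hr => by
    rw [← lintegral_const_mul' _ _ ofReal_ne_top]
    refine setLIntegral_mono' measurableSet_Ioc fun s hs => ?_
    rw [← ENNReal.ofReal_mul' (hK r hr s hs), mul_comm c]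
    exact ENNReal.ofReal_le_ofReal
      (mul_le_mul_of_nonneg_left (hcw s (hmem r hr s hs).1) (hK r hr s hs))
  have hL := lintegral_sq_lintegral_kernel hH hT hKmeas hKnonneg hKcov
  have hsq_le : ∫⁻ r in Ioc 0 T, F r ^ 2 ≤ ENNReal.ofReal M ^ 2 * ENNReal.ofReal V := by
    rw [← hL, ← lintegral_const_mul' _ _ (by finiteness)]
    refine setLIntegral_mono' measurableSet_Ioc fun r hr => ?_
    rw [← mul_pow]
    exact pow_le_pow_left' (hF_le r hr) 2
  have hsq_ge : ENNReal.ofReal c ^ 2 * ENNReal.ofReal V ≤ ∫⁻ r in Ioc 0 T, F r ^ 2 := by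
    rw [← hL, ← lintegral_const_mul' _ _ (by finiteness)]
    refine setLIntegral_mono' measurableSet_Ioc fun r hr => ?_
    rw [← mul_pow]
    exact pow_le_pow_left' (hF_ge r hr) 2
  have hfin : ∫⁻ r in Ioc 0 T, F r ^ 2 ≠ ∞ := ne_top_of_le_ne_top (by finiteness) hsq_le
  have hF_meas : Measurable F := measurable_setLIntegral_Ioc (by fun_prop) T
  -- `toReal` sends the non-integrable case `F r = ∞` to `0`, which is the junk value of `∫`
  have hinner : ∀ r ∈ Ioc 0 T, ∫ s in r..T, K s r * w s = (F r).toReal := fun r hr => by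
    rw [intervalIntegral.integral_of_le hr.2, integral_eq_lintegral_of_nonneg_ae
      ((ae_restrict_iff' measurableSet_Ioc).2 (.of_forall fun s hs =>
        mul_nonneg (hK r hr s hs) (hc.trans (hcw s (hmem r hr s hs).1))))
      (by fun_prop)]
  calc c ^ 2 * V = (ENNReal.ofReal c ^ 2 * ENNReal.ofReal V).toReal := by
        rw [toReal_mul, toReal_pow, toReal_ofReal hc, toReal_ofReal (by positivity)]
    _ ≤ (∫⁻ r in Ioc 0 T, F r ^ 2).toReal := toReal_mono hfin hsq_ge
    _ = ∫ r in Ioc 0 T, (F r).toReal ^ 2 := by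
        simp_rw [← toReal_pow]
        exact (integral_toReal (hF_meas.pow_const 2).aemeasurable
          (ae_lt_top' (by fun_prop) hfin)).symm
    _ = ∫ r in (0:ℝ)..T, (∫ s in r..T, K s r * w s) ^ 2 := by
        rw [intervalIntegral.integral_of_le hT]
        exact setIntegral_congr_fun measurableSet_Ioc fun r hr => by rw [hinner r hr]

theorem le_integral_sq_integral_kernel_mul (hH : 0 < H) (hT : 0 ≤ T)
    (hKmeas : Measurable (uncurry K))
    (hKnonneg : ∀ s ∈ Icc 0 T, ∀ r ∈ Icc 0 T, 0 ≤ K s r)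
    (hKcov : ∀ s ∈ Icc 0 T, ∀ t ∈ Icc 0 T,
      ∫ r in (0:ℝ)..(min s t), K s r * K t r = fbmCovariance H s t)
    {w : ℝ → ℝ} (hw : ContinuousOn w (Icc 0 T))
    {c : ℝ} (hc : 0 ≤ c) (hcw : ∀ s ∈ Icc 0 T, c ≤ w s) :
    c ^ 2 * (T ^ (2*H+2) / (2*H+2)) ≤ ∫ r in (0:ℝ)..T, (∫ s in r..T, K s r * w s) ^ 2 := by
  obtain ⟨w', hw'_cont, hw'⟩ : ∃ w', Continuous w' ∧ EqOn w' w (Icc 0 T) :=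
    ⟨IccExtend hT ((Icc 0 T).domRestrict w), hw.domRestrict.Icc_extend',
      fun s hs => IccExtend_of_mem hT _ hs⟩
  have hbound := le_integral_sq_integral_kernel_mul_of_measurable hH hT hKmeas hKnonneg hKcov
    hw'_cont.measurable
    (image_congr hw' ▸ (isCompact_Icc.image_of_continuousOn hw).bddAbove) hc
    fun s hs => (hw' hs).symm ▸ hcw s hs
  refine hbound.trans_eq (intervalIntegral.integral_congr fun r hr => ?_)
  rw [uIcc_of_le hT] at hr
  refine congrArg (· ^ 2) (intervalIntegral.integral_congr fun s hs => ?_)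
  rw [uIcc_of_le hr.2] at hs
  rw [hw' ⟨hr.1.trans hs.1, hs.2⟩]

end VolterraKernel

theorem malliavin_norm_lower_bound_general (H T a σ : ℝ) (hH : H ∈ Set.Ioo (0:ℝ) 1) (hT : 0 < T)
    (hσ : 0 < σ)
    (K : ℝ → ℝ → ℝ)
    (hKmeas : Measurable (Function.uncurry K))
    (hKnonneg : ∀ s ∈ Icc (0:ℝ) T, ∀ r ∈ Icc (0:ℝ) T, 0 ≤ K s r)
    (hKcov : ∀ s ∈ Icc (0:ℝ) T, ∀ t ∈ Icc (0:ℝ) T,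
      ∫ r in (0:ℝ)..(min s t), K s r * K t r
        = (s ^ (2*H) + t ^ (2*H) - |t - s| ^ (2*H)) / 2)
    (b : ℝ → ℝ) (hb : ContinuousOn b (Icc 0 T)) :
    ∫ r in (0:ℝ)..T, (∫ s in r..T, σ * K s r * Real.exp (a * s + σ * b s)) ^ 2
      ≥ (T ^ (2*H + 2) / (2*H + 2)) * σ ^ 2 *
          Real.exp (-2 * |a| * T + 2 * σ * sInf (b '' Icc 0 T)) := by
  set m := sInf (b '' Icc 0 T)
  have hbdd : BddBelow (b '' Icc 0 T) := (isCompact_Icc.image_of_continuousOn hb).bddBelow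
  have hweight : ∀ s ∈ Icc 0 T,
      σ * Real.exp (-|a| * T + σ * m) ≤ σ * Real.exp (a * s + σ * b s) := fun s hs => by
    have hm : m ≤ b s := csInf_le hbdd (mem_image_of_mem b hs)
    have has : -|a| * T ≤ a * s := by nlinarith [neg_abs_le a, abs_nonneg a, hs.1, hs.2]
    gcongr
  have hbound := le_integral_sq_integral_kernel_mul hH.1 hT.le hKmeas hKnonneg hKcov
    (w := fun s => σ * Real.exp (a * s + σ * b s)) (by fun_prop) (by positivity) hweight
  rw [ge_iff_le]
  convert hbound using 1
  · rw [mul_pow, ← Real.exp_nat_mul]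
    ring_nf
  · simp only [mul_assoc, mul_left_comm σ]

theorem malliavin_norm_lower_bound (H T a σ : ℝ) (hH : H ∈ Set.Ioo (0:ℝ) 1) (hT : 0 < T)
    (hσ : 0 < σ)
    (K : ℝ → ℝ → ℝ)
    (hKmeas : Measurable (Function.uncurry K))
    (hKnonneg : ∀ s ∈ Icc (0:ℝ) T, ∀ r ∈ Icc (0:ℝ) T, 0 ≤ K s r)
    (hKzero : ∀ s ∈ Icc (0:ℝ) T, ∀ r ∈ Icc (0:ℝ) T, s < r → K s r = 0)
    (hKcov : ∀ s ∈ Icc (0:ℝ) T, ∀ t ∈ Icc (0:ℝ) T,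
      ∫ r in (0:ℝ)..(min s t), K s r * K t r
        = (s ^ (2*H) + t ^ (2*H) - |t - s| ^ (2*H)) / 2)
    (b : ℝ → ℝ) (hb : ContinuousOn b (Icc 0 T)) :
    ∫ r in (0:ℝ)..T, (∫ s in r..T, σ * K s r * Real.exp (a * s + σ * b s)) ^ 2
      ≥ (T ^ (2*H + 2) / (2*H + 2)) * σ ^ 2 *
          Real.exp (-2 * |a| * T + 2 * σ * sInf (b '' Icc 0 T)) :=
  malliavin_norm_lower_bound_general H T a σ hH hT hσ K hKmeas hKnonneg hKcov b hb
end
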